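/- Every graph of the form Θ_{1,p₁,...,p_r} with all pᵢ even positive integers lies in G*, i.e., any two distinct odd cycles of such a graph share at most one edge. -/

import Mathlib

open SimpleGraph

/-- Adjacency in the line graph `L(G)`: two distinct edges sharing an endpoint. -/
def lineAdj {V : Type*} (G : SimpleGraph V) (e f : G.edgeSet) : Prop :=
  e ≠ f ∧ ∃ x : V, x ∈ (e : Sym2 V) ∧ x ∈ (f : Sym2 V)

/-- `D` is an orientation of the (loopless) adjacency relation `Adj`:
every arc of `D` is an edge, and every edge gets at least one of its two arcs. -/
def IsOrientation {α : Type*} (Adj : α → α → Prop) (D : α → α → Prop) : Prop :=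
  (∀ a b, D a b → Adj a b) ∧ (∀ a b, Adj a b → D a b ∨ D b a)

/-- A digraph (relation) is kernel-perfect if every induced subdigraph has a kernel:
an independent set `S` such that every vertex outside `S` has an out-neighbor in `S`. -/
def KernelPerfect {α : Type*} (D : α → α → Prop) : Prop :=
  ∀ Z : Set α, ∃ S ⊆ Z, (∀ a ∈ S, ∀ b ∈ S, ¬ D a b) ∧
    ∀ z ∈ Z, z ∉ S → ∃ s ∈ S, D z s

/-- Out-degree of a vertex in a digraph given as a relation. -/
noncomputable def outDeg {α : Type*} (D : α → α → Prop) (a : α) : ℕ := {b | D a b}.ncard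

/-- Degree of a vertex. -/
noncomputable def deg {V : Type*} (G : SimpleGraph V) (v : V) : ℕ := (G.neighborSet v).ncard

/-- Maximum degree. -/
noncomputable def maxDeg {V : Type*} (G : SimpleGraph V) : ℕ := sSup (Set.range (deg G))

/-- `G` is `f`-edge-orientable: `L(G)` admits a kernel-perfect orientation with
`1 + d⁺(e) ≤ f e` for every edge `e`. -/
def EdgeOrientable {V : Type*} (G : SimpleGraph V) (f : G.edgeSet → ℕ) : Prop :=
  ∃ D : G.edgeSet → G.edgeSet → Prop,
    IsOrientation (lineAdj G) D ∧ KernelPerfect D ∧ ∀ e, outDeg D e + 1 ≤ f e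

open Classical in
/-- The function `f_{k,v}`: `deg v` on edges incident to `v`, and `k` elsewhere. -/
noncomputable def fkv {V : Type*} (G : SimpleGraph V) (k : ℕ) (v : V) (e : G.edgeSet) : ℕ :=
  if v ∈ (e : Sym2 V) then deg G v else k

/-- `G` is strongly `k`-edge-orientable. -/
def StronglyEdgeOrientable {V : Type*} (G : SimpleGraph V) (k : ℕ) : Prop :=
  ∀ v : V, EdgeOrientable G (fkv G k v)

/-- `G` is `f`-edge-choosable. -/
def FEdgeChoosable {V : Type*} (G : SimpleGraph V) (f : G.edgeSet → ℕ) : Prop :=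
  ∀ ℓ : G.edgeSet → Finset ℕ, (∀ e, f e ≤ (ℓ e).card) →
    ∃ φ : G.edgeSet → ℕ, (∀ e, φ e ∈ ℓ e) ∧
      ∀ e₁ e₂, lineAdj G e₁ e₂ → φ e₁ ≠ φ e₂

/-- `G ∈ G*`: any two distinct odd cycles share at most one edge. -/
def InGStar {V : Type*} (G : SimpleGraph V) : Prop :=
  ∀ (u w : V) (c₁ : G.Walk u u) (c₂ : G.Walk w w),
    c₁.IsCycle → c₂.IsCycle → Odd c₁.length → Odd c₂.length →
    {e | e ∈ c₁.edges} ≠ {e | e ∈ c₂.edges} →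
    ({e | e ∈ c₁.edges} ∩ {e | e ∈ c₂.edges}).ncard ≤ 1

/-- `G` is 2-connected: connected, and still connected after deleting any one vertex. -/
def TwoConn {V : Type*} (G : SimpleGraph V) : Prop :=
  G.Connected ∧ ∀ v : V, (G.induce {w | w ≠ v}).Connected

/-- A block of `G`: a maximal 2-connected subgraph. -/
def IsBlock {V : Type*} (G : SimpleGraph V) (B : G.Subgraph) : Prop :=
  TwoConn B.coe ∧ ∀ B' : G.Subgraph, TwoConn B'.coe → B ≤ B' → B = B'

/-- Vertex type of the theta graph with path lengths `l`: two hubs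
(`Sum.inl false`, `Sum.inl true`) plus the internal vertices of each path. -/
def ThetaVert (l : List ℕ) : Type := Bool ⊕ (Σ i : Fin l.length, Fin (l.get i - 1))

/-- The theta graph `Θ_{l₁,…,l_k}`: two hubs joined by internally disjoint paths,
the `i`-th of length `l i`. -/
def thetaGraph (l : List ℕ) : SimpleGraph (ThetaVert l) :=
  SimpleGraph.fromRel (fun a b =>
    match a, b with
    | Sum.inl false, Sum.inl true => 1 ∈ l
    | Sum.inl false, Sum.inr ⟨_, j⟩ => j.val = 0
    | Sum.inl true, Sum.inr ⟨i, j⟩ => j.val = l.get i - 2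
    | Sum.inr ⟨i, j⟩, Sum.inr ⟨i', j'⟩ => i.val = i'.val ∧ j'.val = j.val + 1
    | _, _ => False)

/-- `v` (outside `c`) touches `w ∈ c`: some `v,w`-path meets `c` only at `w`. -/
def Touches {V : Type*} (G : SimpleGraph V) {u : V} (c : G.Walk u u) (v w : V) : Prop :=
  w ∈ c.support ∧ ∃ p : G.Walk v w, p.IsPath ∧ ∀ x ∈ p.support, x ∈ c.support → x = w

/-! Deleting the chord `x₁x₂` leaves a bipartite graph, because every other path between the hubs
has even length; so every odd cycle uses the chord. An internal vertex of a path has degree two,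
so a cycle through one internal vertex of a path runs through the whole path, and a cycle through
the chord meets the hub `x₁` in only one further edge, so it uses the chord and exactly one path.
Two odd cycles sharing an edge other than the chord therefore consist of the chord and the same
path. -/

namespace SimpleGraph.Walk
variable {V : Type*} {G : SimpleGraph V} {u v : V}

lemma mem_edges_of_odd_length {e : Sym2 V} (hG : (G.deleteEdges {e}).Colorable 2)
    (c : G.Walk u u) (hc : Odd c.length) : e ∈ c.edges := by
  by_contra he
  have := two_colorable_iff_forall_loop_even.mp hG u (c.toDeleteEdge e he)
  rw [length_transfer] at this
  exact Nat.not_even_iff_odd.mpr hc this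

lemma IsCycle.mk_mem_edges_of_neighborSet_subset {c : G.Walk u u} (hc : c.IsCycle)
    (hv : v ∈ c.support) {x y w : V} (hN : G.neighborSet v ⊆ {x, y}) (hw : G.Adj v w) :
    s(v, w) ∈ c.edges := by
  have hsub : c.toSubgraph.neighborSet v ⊆ {x, y} :=
    (c.toSubgraph.neighborSet_subset v).trans hN
  have hpair : ({x, y} : Set V).ncard ≤ 2 :=
    (Set.ncard_insert_le x {y}).trans_eq (by rw [Set.ncard_singleton])
  have heq := Set.eq_of_subset_of_ncard_le hsub
    (hpair.trans (hc.ncard_neighborSet_toSubgraph_eq_two hv).ge)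
  rw [← adj_toSubgraph_iff_mem_edges, ← Subgraph.mem_neighborSet, heq]
  exact hN hw

lemma IsCycle.eq_or_eq_or_eq_of_mk_mem_edges {c : G.Walk u u} (hc : c.IsCycle) {a b d : V}
    (ha : s(v, a) ∈ c.edges) (hb : s(v, b) ∈ c.edges) (hd : s(v, d) ∈ c.edges) :
    a = b ∨ a = d ∨ b = d := by
  by_contra! h
  have hsub : {a, b, d} ⊆ c.toSubgraph.neighborSet v := by
    simp only [Set.insert_subset_iff, Set.singleton_subset_iff, Subgraph.mem_neighborSet,
      adj_toSubgraph_iff_mem_edges]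
    exact ⟨ha, hb, hd⟩
  have := Set.ncard_le_ncard hsub (c.finite_neighborSet_toSubgraph)
  rw [Set.ncard_eq_three.mpr ⟨a, b, d, h.1, h.2.1, h.2.2, rfl⟩,
    hc.ncard_neighborSet_toSubgraph_eq_two (c.fst_mem_support_of_mem_edges ha)] at this
  omega

end SimpleGraph.Walk

lemma Fin.iff_of_forall_val_add_one_eq {m : ℕ} {Q : Fin m → Prop}
    (h : ∀ a b : Fin m, a.val + 1 = b.val → (Q a ↔ Q b)) (a b : Fin m) : Q a ↔ Q b := by
  have hm : 0 < m := a.pos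
  have key : ∀ n (hn : n < m), Q ⟨n, hn⟩ ↔ Q ⟨0, hm⟩ := by
    intro n
    induction n with
    | zero => exact fun _ => Iff.rfl
    | succ n ih => exact fun hn => (h ⟨n, by omega⟩ ⟨n + 1, hn⟩ rfl).symm.trans (ih _)
  exact (key a a.isLt).trans (key b b.isLt).symm

-- lets `simp` and `rw` see the `Sum`/`Sigma` structure of the vertices
attribute [reducible] ThetaVert

namespace thetaGraph
variable {l : List ℕ}

lemma adj_inr_succ {i : Fin l.length} {n : ℕ} (h : n < l.get i - 1) (h' : n + 1 < l.get i - 1) :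
    (thetaGraph l).Adj (Sum.inr ⟨i, ⟨n, h⟩⟩) (Sum.inr ⟨i, ⟨n + 1, h'⟩⟩) :=
  (fromRel_adj _ _ _).mpr ⟨by simp, Or.inl ⟨rfl, rfl⟩⟩

lemma adj_inr_zero {i : Fin l.length} (h : 0 < l.get i - 1) :
    (thetaGraph l).Adj (Sum.inr ⟨i, ⟨0, h⟩⟩) (Sum.inl false) :=
  (fromRel_adj _ _ _).mpr ⟨Sum.inr_ne_inl, Or.inr rfl⟩

lemma neighborSet_inr_subset (i : Fin l.length) (j : Fin (l.get i - 1)) :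
    ∃ x y, (thetaGraph l).neighborSet (Sum.inr ⟨i, j⟩) ⊆ {x, y} := by
  obtain ⟨j, hj⟩ := j
  refine ⟨if h : j = 0 then Sum.inl false else Sum.inr ⟨i, ⟨j - 1, by omega⟩⟩,
    if h : j + 1 < l.get i - 1 then Sum.inr ⟨i, ⟨j + 1, h⟩⟩ else Sum.inl true, ?_⟩
  rintro ((_ | _) | ⟨i', j', hj'⟩) hw <;>
    have hw := (fromRel_adj _ _ _).mp (show (thetaGraph l).Adj _ _ from hw) <;>
    simp only [ne_eq, false_or, List.get_eq_getElem] at hw <;>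
    simp only [Set.mem_insert_iff, Set.mem_singleton_iff]
  · simp [hw.2]
  · right
    rw [dif_neg (by simp only [List.get_eq_getElem]; omega)]
  · obtain ⟨-, ⟨hi, rfl⟩ | ⟨hi, rfl⟩⟩ := hw <;> obtain rfl : i = i' := Fin.ext (by omega)
    · exact Or.inr (by rw [dif_pos hj'])
    · simp

def hubEdge (l : List ℕ) : Sym2 (ThetaVert l) := s(Sum.inl false, Sum.inl true)

-- the vertex `⟨i, j⟩` lies at distance `j + 1` from the hub `Sum.inl false` along path `i`
def color : ThetaVert l → Bool
  | Sum.inl _ => false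
  | Sum.inr ⟨_, j⟩ => decide (Even j.val)

lemma color_ne_color_of_adj (hl : ∀ p ∈ l, 2 ≤ p → Even p) {a b : ThetaVert l}
    (hadj : (thetaGraph l).Adj a b) (hab : s(a, b) ≠ hubEdge l) : color a ≠ color b := by
  have hrel := ((fromRel_adj _ _ _).mp hadj).2
  rcases a with (_ | _) | ⟨i, j, hj⟩ <;> rcases b with (_ | _) | ⟨i', j', hj'⟩ <;>
    simp only [hubEdge, color, ne_eq, Sym2.eq, Sym2.rel_iff', Prod.mk.injEq, Prod.swap_prod_mk,
      Sum.inl.injEq, reduceCtorEq, Bool.true_eq_false, Bool.false_eq_true, List.get_eq_getElem,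
      and_self, and_true, and_false, or_self, or_true, or_false, false_or, not_true_eq_false,
      not_false_eq_true, decide_eq_decide, false_eq_decide_iff, decide_eq_false_iff_not,
      not_not] at hrel hab ⊢
  · exact ⟨0, hrel⟩
  · obtain ⟨m, hm⟩ := hl _ (List.getElem_mem (h := i'.isLt)) (by rw [List.get_eq_getElem] at hj'; omega)
    exact ⟨m - 1, by omega⟩
  · exact ⟨0, hrel⟩
  · obtain ⟨m, hm⟩ := hl _ (List.getElem_mem (h := i.isLt)) (by rw [List.get_eq_getElem] at hj; omega)
    exact ⟨m - 1, by omega⟩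
  · rcases hrel with ⟨-, rfl⟩ | ⟨-, rfl⟩ <;> simp only [Nat.even_add_one] <;> tauto

lemma colorable_deleteEdges_hubEdge (hl : ∀ p ∈ l, 2 ≤ p → Even p) :
    ((thetaGraph l).deleteEdges {hubEdge l}).Colorable 2 :=
  (Coloring.mk color fun hab => color_ne_color_of_adj hl (deleteEdges_adj.mp hab).1
    (deleteEdges_adj.mp hab).2).colorable

variable {u : ThetaVert l} {c : (thetaGraph l).Walk u u}

lemma mk_inr_mem_edges (hc : c.IsCycle) {i : Fin l.length} {j : Fin (l.get i - 1)}
    (hv : Sum.inr ⟨i, j⟩ ∈ c.support) {w : ThetaVert l}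
    (hw : (thetaGraph l).Adj (Sum.inr ⟨i, j⟩) w) : s(Sum.inr ⟨i, j⟩, w) ∈ c.edges :=
  let ⟨_, _, hN⟩ := neighborSet_inr_subset i j
  hc.mk_mem_edges_of_neighborSet_subset hv hN hw

lemma inr_mem_support_iff (hc : c.IsCycle) {i : Fin l.length} (j j' : Fin (l.get i - 1)) :
    Sum.inr ⟨i, j⟩ ∈ c.support ↔ Sum.inr ⟨i, j'⟩ ∈ c.support := by
  refine Fin.iff_of_forall_val_add_one_eq (Q := fun j => Sum.inr ⟨i, j⟩ ∈ c.support) ?_ j j'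
  rintro ⟨a, ha⟩ ⟨b, hb⟩ rfl
  have hadj := adj_inr_succ ha hb
  exact ⟨fun h => c.snd_mem_support_of_mem_edges (mk_inr_mem_edges hc h hadj),
    fun h => c.snd_mem_support_of_mem_edges (mk_inr_mem_edges hc h hadj.symm)⟩

lemma mk_inl_false_mem_edges (hc : c.IsCycle) {i : Fin l.length} {j : Fin (l.get i - 1)}
    (hv : Sum.inr ⟨i, j⟩ ∈ c.support) : s(Sum.inl false, Sum.inr ⟨i, ⟨0, j.pos⟩⟩) ∈ c.edges :=
  Sym2.eq_swap ▸ mk_inr_mem_edges hc ((inr_mem_support_iff hc j _).mp hv) (adj_inr_zero _)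

lemma eq_of_inr_mem_support (hc : c.IsCycle) (he : hubEdge l ∈ c.edges)
    {i i' : Fin l.length} {j : Fin (l.get i - 1)} {j' : Fin (l.get i' - 1)}
    (hv : Sum.inr ⟨i, j⟩ ∈ c.support) (hv' : Sum.inr ⟨i', j'⟩ ∈ c.support) : i = i' := by
  rcases hc.eq_or_eq_or_eq_of_mk_mem_edges he (mk_inl_false_mem_edges hc hv)
    (mk_inl_false_mem_edges hc hv') with h | h | h
  · exact absurd h Sum.inl_ne_inr
  · exact absurd h Sum.inl_ne_inr
  · exact (Sigma.mk.inj_iff.mp (Sum.inr_injective h)).1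

lemma eq_hubEdge_or_exists_inr {e : Sym2 (ThetaVert l)} (he : e ∈ (thetaGraph l).edgeSet) :
    e = hubEdge l ∨
      ∃ i j w, e = s(Sum.inr ⟨i, j⟩, w) ∧ (thetaGraph l).Adj (Sum.inr ⟨i, j⟩) w := by
  induction e using Sym2.ind with
  | _ a b =>
    rw [mem_edgeSet] at he
    rcases a with (_ | _) | ⟨i, j⟩
    · rcases b with (_ | _) | ⟨i, j⟩
      · exact (he.ne rfl).elim
      · exact Or.inl rfl
      · exact Or.inr ⟨i, j, _, Sym2.eq_swap, he.symm⟩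
    · rcases b with (_ | _) | ⟨i, j⟩
      · exact Or.inl Sym2.eq_swap
      · exact (he.ne rfl).elim
      · exact Or.inr ⟨i, j, _, Sym2.eq_swap, he.symm⟩
    · exact Or.inr ⟨i, j, b, rfl, he⟩

lemma edges_subset_of_inr_mem_support {w : ThetaVert l} {c' : (thetaGraph l).Walk w w}
    (hc : c.IsCycle) (hc' : c'.IsCycle) (he : hubEdge l ∈ c.edges) (he' : hubEdge l ∈ c'.edges)
    {i : Fin l.length} {j : Fin (l.get i - 1)}
    (hv : Sum.inr ⟨i, j⟩ ∈ c.support) (hv' : Sum.inr ⟨i, j⟩ ∈ c'.support) :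
    c.edges ⊆ c'.edges := by
  intro e he_mem
  obtain rfl | ⟨i', j', x, rfl, hadj⟩ := eq_hubEdge_or_exists_inr (c.edges_subset_edgeSet he_mem)
  · exact he'
  obtain rfl := eq_of_inr_mem_support hc he (c.fst_mem_support_of_mem_edges he_mem) hv
  exact mk_inr_mem_edges hc' ((inr_mem_support_iff hc' j j').mp hv') hadj

end thetaGraph

theorem stmt4 (ps : List ℕ) (hps : ∀ p ∈ ps, Even p ∧ 0 < p) :
    InGStar (thetaGraph (1 :: ps)) := by
  have hl : ∀ p ∈ 1 :: ps, 2 ≤ p → Even p := by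
    intro p hp h2
    rcases List.mem_cons.mp hp with rfl | hp
    · omega
    · exact (hps p hp).1
  intro u w c₁ c₂ hc₁ hc₂ ho₁ ho₂ hne
  have hcol := thetaGraph.colorable_deleteEdges_hubEdge hl
  have he₁ := c₁.mem_edges_of_odd_length hcol ho₁
  have he₂ := c₂.mem_edges_of_odd_length hcol ho₂
  have hsub : {e | e ∈ c₁.edges} ∩ {e | e ∈ c₂.edges} ⊆ {thetaGraph.hubEdge _} := by
    rintro e ⟨h₁, h₂⟩
    refine (thetaGraph.eq_hubEdge_or_exists_inr (c₁.edges_subset_edgeSet h₁)).resolve_right ?_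
    rintro ⟨i, j, x, rfl, -⟩
    have hv₁ := c₁.fst_mem_support_of_mem_edges h₁
    have hv₂ := c₂.fst_mem_support_of_mem_edges h₂
    exact hne (Set.Subset.antisymm
      (fun _ h => thetaGraph.edges_subset_of_inr_mem_support hc₁ hc₂ he₁ he₂ hv₁ hv₂ h)
      (fun _ h => thetaGraph.edges_subset_of_inr_mem_support hc₂ hc₁ he₂ he₁ hv₂ hv₁ h))
  exact (Set.ncard_le_ncard hsub).trans (Set.ncard_singleton _).le
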